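/- arXiv:1709.09594 — 2 statements merged into one kernel-verified Lean document; each statement's English description precedes it below -/
import Mathlib

section
/- Numerical core of Lemma 2 (edge-releasing increases h): Let r ≥ 1 be a natural number, let a be a natural number, and let b : Fin r → ℕ satisfy a ≥ b i and b i ≥ 2 for every i. Then a·log₂ a + Σ_{i} (b i)·log₂(b i) < (a + r)·log₂(a + r) + Σ_{i} (b i − 1)·log₂(b i − 1) (as real numbers, with natural numbers cast to ℝ). This expresses that if a vertex u of degree a with a ≥ max_i b i receives r edges, each moved away from a vertex of degree b i ≥ 2, then Σ_v d(v)·log₂ d(v) strictly increases. -/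
/-!
The function `f x = x * log₂ x` is strictly convex, so its unit increments `f (t + 1) - f t`
strictly increase in `t`. Pair the `i`-th donor `b i` with the step from `a + i` to `a + i + 1`:
since `b i - 1 < a + i`, the loss `f (b i) - f (b i - 1)` is strictly smaller than the gain
`f (a + i + 1) - f (a + i)`, and the gains telescope to `f (a + r) - f a`.
-/

open Real Finset Set

lemma strictConvexOn_mul_logb {b : ℝ} (hb : 1 < b) :
    StrictConvexOn ℝ (Ici 0) fun x ↦ x * logb b x := by
  refine ⟨convex_Ici 0, fun x hx y hy hxy p q hp hq hpq ↦ ?_⟩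
  have h := strictConvexOn_mul_log.2 hx hy hxy hp hq hpq
  simp only [smul_eq_mul, logb, mul_div_assoc'] at h ⊢
  rw [← add_div]
  exact div_lt_div_of_pos_right h (log_pos hb)

lemma StrictConvexOn.map_add_one_sub_map_lt {s : Set ℝ} {f : ℝ → ℝ} (hf : StrictConvexOn ℝ s f)
    {u v : ℝ} (hu : u ∈ s) (hv : v + 1 ∈ s) (huv : u < v) :
    f (u + 1) - f u < f (v + 1) - f v := by
  have h₁ := hf.secant_strict_mono_aux2 hu hv (lt_add_one u) (by linarith)
  have h₂ := hf.secant_strict_mono_aux3 hu hv huv (lt_add_one v)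
  simp only [add_sub_cancel_left, div_one] at h₁ h₂
  exact h₁.trans h₂

lemma Fin.sum_univ_sub_telescope (f : ℝ → ℝ) (a : ℝ) (r : ℕ) :
    ∑ i : Fin r, (f (a + i + 1) - f (a + i)) = f (a + r) - f a := by
  rw [Fin.sum_univ_eq_sum_range (fun k ↦ f (a + k + 1) - f (a + k))]
  simpa [add_assoc] using sum_range_sub (fun k : ℕ ↦ f (a + k)) r

lemma StrictConvexOn.add_sum_lt_add_sum_sub_one {s : Set ℝ} {f : ℝ → ℝ}
    (hf : StrictConvexOn ℝ s f) {r : ℕ} (hr : 0 < r) {a : ℝ} {b : Fin r → ℝ}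
    (hb : ∀ i, b i - 1 ∈ s) (ha : a + r ∈ s) (hba : ∀ i, b i ≤ a) :
    f a + ∑ i, f (b i) < f (a + r) + ∑ i, f (b i - 1) := by
  have : Nonempty (Fin r) := ⟨⟨0, hr⟩⟩
  have step (i : Fin r) : f (b i) - f (b i - 1) < f (a + i + 1) - f (a + i) := by
    have hi : (0 : ℝ) ≤ i := i.val.cast_nonneg
    have hir : (i : ℝ) + 1 ≤ r := by exact_mod_cast i.isLt
    have hmem : a + i + 1 ∈ s :=
      hf.1.ordConnected.out (hb i) ha ⟨by linarith [hba i], by linarith⟩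
    simpa using hf.map_add_one_sub_map_lt (hb i) hmem (by linarith [hba i])
  have hsum := sum_lt_sum_of_nonempty univ_nonempty fun i _ ↦ step i
  rw [sum_sub_distrib, Fin.sum_univ_sub_telescope] at hsum
  linarith

/-- Numerical core of Lemma 2 (edge-releasing increases `h`): if `r ≥ 1`,
`a ≥ b i` and `b i ≥ 2` for all `i`, then
`a·log₂ a + Σ_i (b i)·log₂(b i) < (a + r)·log₂(a + r) + Σ_i (b i − 1)·log₂(b i − 1)`. -/
theorem stmt_4 (r : ℕ) (hr : 1 ≤ r) (a : ℕ) (b : Fin r → ℕ)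
    (hab : ∀ i, b i ≤ a) (hb : ∀ i, 2 ≤ b i) :
    (a : ℝ) * Real.logb 2 a + ∑ i, (b i : ℝ) * Real.logb 2 (b i) <
      ((a : ℝ) + (r : ℝ)) * Real.logb 2 ((a : ℝ) + (r : ℝ)) +
        ∑ i, ((b i : ℝ) - 1) * Real.logb 2 ((b i : ℝ) - 1) := by
  refine (strictConvexOn_mul_logb one_lt_two).add_sum_lt_add_sum_sub_one hr
    (fun i ↦ ?_) (by positivity : (0 : ℝ) ≤ a + r) (fun i ↦ by exact_mod_cast hab i)
  have : (2 : ℝ) ≤ b i := by exact_mod_cast hb i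
  exact mem_Ici.2 (by linarith)
end

section
/- Lemma 4(b): Let T be a k-uniform supertree on n vertices with m = (n−1)/(k−1) ≥ 2 edges, where k ≥ 3. Then h(T) = Σ_{v} d(v)·log₂ d(v) ≤ m·log₂ m, and equality holds if and only if some vertex of T has degree m (equivalently, T is the hyperstar S^k_{m+1}, in which one vertex lies in all m edges and every other vertex has degree 1). -/
open Finset

/-- Degree of a vertex in a hypergraph given by its edge set. -/
def hdeg {V : Type*} [DecidableEq V] (E : Finset (Finset V)) (v : V) : ℕ :=
  (E.filter (fun e => v ∈ e)).card

/-- `h(H) = Σ_{v ∈ V} d(v)·log₂ d(v)`. -/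
noncomputable def hval {V : Type*} [Fintype V] [DecidableEq V]
    (E : Finset (Finset V)) : ℝ :=
  ∑ v : V, (hdeg E v : ℝ) * Real.logb 2 (hdeg E v)

/-- The hypergraph is connected: the simple graph on `V` in which `u` is adjacent
to `w` iff `u ≠ w` and some edge contains both is connected. -/
def hconn {V : Type*} (E : Finset (Finset V)) : Prop :=
  (SimpleGraph.fromRel (fun u w => ∃ e ∈ E, u ∈ e ∧ w ∈ e)).Connected


/-!
On `[1, m]` the strictly convex function `x log x` lies below its chord through `(1, 0)` and
`(m, m log m)`, touching it only at the endpoints. In a `k`-uniform supertree every degree lies in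
`[1, m]` and the excesses `d(v) - 1` add up to `mk - n = m - 1`, so summing the chord bounds gives
`Σ d(v) log d(v) ≤ m log m`, with equality iff every degree is `1` or `m`.
-/

namespace Real

lemma mul_log_le_chord {x M : ℝ} (hM : 1 < M) (hx1 : 1 ≤ x) (hxM : x ≤ M) :
    x * log x ≤ (x - 1) / (M - 1) * (M * log M) := by
  have hM1 : 0 < M - 1 := by linarith
  have hx : (M - x) / (M - 1) * 1 + (x - 1) / (M - 1) * M = x := by field_simp; ring
  have h := convexOn_mul_log.2 (Set.mem_Ici.2 zero_le_one)
    (Set.mem_Ici.2 (by linarith : (0 : ℝ) ≤ M))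
    (div_nonneg (sub_nonneg.2 hxM) hM1.le) (div_nonneg (sub_nonneg.2 hx1) hM1.le)
    (by field_simp; ring)
  simpa only [smul_eq_mul, hx, log_one, mul_zero, zero_add] using h

lemma mul_log_lt_chord {x M : ℝ} (hM : 1 < M) (hx1 : 1 < x) (hxM : x < M) :
    x * log x < (x - 1) / (M - 1) * (M * log M) := by
  have hM1 : 0 < M - 1 := by linarith
  have hx : (M - x) / (M - 1) * 1 + (x - 1) / (M - 1) * M = x := by field_simp; ring
  have h := strictConvexOn_mul_log.2 (Set.mem_Ici.2 zero_le_one)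
    (Set.mem_Ici.2 (by linarith : (0 : ℝ) ≤ M)) hM.ne
    (div_pos (sub_pos.2 hxM) hM1) (div_pos (sub_pos.2 hx1) hM1) (by field_simp; ring)
  simpa only [smul_eq_mul, hx, log_one, mul_zero, zero_add] using h

section ChordSum

variable {ι : Type*} {s : Finset ι} {x : ι → ℝ} {M : ℝ}

lemma sum_sub_one_div_mul_eq (hM : 1 < M) (hsum : ∑ i ∈ s, (x i - 1) = M - 1) (K : ℝ) :
    ∑ i ∈ s, (x i - 1) / (M - 1) * K = K := by
  rw [← sum_mul, ← sum_div, hsum, div_self (by linarith), one_mul]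

lemma sum_mul_log_le_of_sum_sub_one_eq (hM : 1 < M) (hx1 : ∀ i ∈ s, 1 ≤ x i)
    (hxM : ∀ i ∈ s, x i ≤ M) (hsum : ∑ i ∈ s, (x i - 1) = M - 1) :
    ∑ i ∈ s, x i * log (x i) ≤ M * log M :=
  calc ∑ i ∈ s, x i * log (x i) ≤ ∑ i ∈ s, (x i - 1) / (M - 1) * (M * log M) :=
        sum_le_sum fun i hi => mul_log_le_chord hM (hx1 i hi) (hxM i hi)
    _ = M * log M := sum_sub_one_div_mul_eq hM hsum _

lemma sum_mul_log_eq_iff_of_sum_sub_one_eq (hM : 1 < M) (hx1 : ∀ i ∈ s, 1 ≤ x i)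
    (hxM : ∀ i ∈ s, x i ≤ M) (hsum : ∑ i ∈ s, (x i - 1) = M - 1) :
    ∑ i ∈ s, x i * log (x i) = M * log M ↔ ∃ i ∈ s, x i = M := by
  classical
  constructor
  · intro heq
    obtain ⟨i, hi, hxi⟩ : ∃ i ∈ s, x i ≠ 1 := by
      by_contra! h
      rw [sum_eq_zero fun i hi => sub_eq_zero.2 (h i hi)] at hsum
      linarith
    refine ⟨i, hi, (hxM i hi).eq_or_lt.resolve_right fun hlt => ?_⟩
    rw [← sum_sub_one_div_mul_eq hM hsum (M * log M)] at heq
    have := (sum_eq_sum_iff_of_le fun i hi => mul_log_le_chord hM (hx1 i hi) (hxM i hi)).1 heq i hi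
    exact (mul_log_lt_chord hM ((hx1 i hi).lt_of_ne' hxi) hlt).ne this
  · rintro ⟨i, hi, hxi⟩
    have hrest : ∀ j ∈ s.erase i, x j = 1 := by
      rw [← add_sum_erase s _ hi, hxi, add_eq_left,
        sum_eq_zero_iff_of_nonneg fun j hj => sub_nonneg.2 (hx1 j (mem_of_mem_erase hj))] at hsum
      exact fun j hj => sub_eq_zero.1 (hsum j hj)
    rw [← add_sum_erase s _ hi, hxi,
      sum_eq_zero fun j hj => by rw [hrest j hj, log_one, mul_zero], add_zero]

end ChordSum

end Real

section Hypergraph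

variable {V : Type*} [DecidableEq V]

lemma hdeg_le_card (E : Finset (Finset V)) (v : V) : hdeg E v ≤ E.card :=
  card_filter_le E _

lemma sum_hdeg_eq_sum_card [Fintype V] (E : Finset (Finset V)) :
    ∑ v, hdeg E v = ∑ e ∈ E, e.card := by
  have := sum_card_bipartiteAbove_eq_sum_card_bipartiteBelow (s := univ) (t := E) (· ∈ ·)
  simpa [hdeg, bipartiteAbove, bipartiteBelow] using this

lemma sum_hdeg_eq_card_mul [Fintype V] {E : Finset (Finset V)} {k : ℕ}
    (hunif : ∀ e ∈ E, e.card = k) : ∑ v, hdeg E v = E.card * k := by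
  rw [sum_hdeg_eq_sum_card, sum_congr rfl hunif, sum_const, smul_eq_mul]

lemma one_le_hdeg_of_hconn [Nontrivial V] {E : Finset (Finset V)} (hc : hconn E) (v : V) :
    1 ≤ hdeg E v := by
  obtain ⟨w, hvw⟩ := hc.preconnected.exists_adj_of_nontrivial v
  obtain ⟨e, he, hv⟩ : ∃ e ∈ E, v ∈ e := by
    rcases (SimpleGraph.fromRel_adj _ _ _).1 hvw with
      ⟨-, ⟨e, he, hv, -⟩ | ⟨e, he, -, hv⟩⟩ <;> exact ⟨e, he, hv⟩
  exact card_pos.2 ⟨e, mem_filter.2 ⟨he, hv⟩⟩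

lemma hval_mul_log_two [Fintype V] (E : Finset (Finset V)) :
    hval E * Real.log 2 = ∑ v, (hdeg E v : ℝ) * Real.log (hdeg E v) := by
  rw [hval, sum_mul]
  refine sum_congr rfl fun v _ => ?_
  rw [Real.logb, mul_assoc, div_mul_cancel₀ _ (Real.log_pos one_lt_two).ne']

end Hypergraph

/-- Lemma 4(b): for a k-uniform supertree with `m ≥ 2` edges, `h(T) ≤ m·log₂ m`,
with equality iff some vertex has degree `m` (i.e. `T` is the hyperstar). -/
theorem stmt_6 {V : Type*} [Fintype V] [DecidableEq V] (k n m : ℕ) (hk : 3 ≤ k)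
    (E : Finset (Finset V)) (hunif : ∀ e ∈ E, e.card = k)
    (hn : Fintype.card V = n) (hm : E.card = m) (hm2 : 2 ≤ m)
    (hc : hconn E) (hacyc : m * (k - 1) = n - 1) :
    hval E ≤ (m : ℝ) * Real.logb 2 m ∧
      (hval E = (m : ℝ) * Real.logb 2 m ↔ ∃ v : V, hdeg E v = m) := by
  have hmk : 2 * 2 ≤ m * (k - 1) := Nat.mul_le_mul hm2 (by omega)
  have : Nontrivial V := Fintype.one_lt_card_iff_nontrivial.1 (by omega)
  have hdeg_sum : ∑ v, hdeg E v = n + (m - 1) := by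
    rw [sum_hdeg_eq_card_mul hunif, hm]
    have : m * k = m * (k - 1) + m := by
      rw [← mul_add_one, Nat.sub_add_cancel (by omega)]
    omega
  have hexcess : ∑ v, ((hdeg E v : ℝ) - 1) = m - 1 := by
    rw [sum_sub_distrib, ← Nat.cast_sum, hdeg_sum, sum_const, card_univ, hn]
    push_cast [Nat.cast_sub (by omega : 1 ≤ m)]
    ring
  have hx1 : ∀ v ∈ univ, (1 : ℝ) ≤ hdeg E v :=
    fun v _ => by exact_mod_cast one_le_hdeg_of_hconn hc v
  have hxM : ∀ v ∈ univ, (hdeg E v : ℝ) ≤ m :=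
    fun v _ => by exact_mod_cast hm ▸ hdeg_le_card E v
  have hM : (1 : ℝ) < m := by exact_mod_cast hm2
  have hlog2 : 0 < Real.log 2 := Real.log_pos one_lt_two
  have hrhs : (m : ℝ) * Real.logb 2 m * Real.log 2 = m * Real.log m := by
    rw [Real.logb, mul_assoc, div_mul_cancel₀ _ hlog2.ne']
  constructor
  · rw [← mul_le_mul_iff_left₀ hlog2, hval_mul_log_two, hrhs]
    exact Real.sum_mul_log_le_of_sum_sub_one_eq hM hx1 hxM hexcess
  · rw [← mul_left_inj' hlog2.ne', hval_mul_log_two, hrhs,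
      Real.sum_mul_log_eq_iff_of_sum_sub_one_eq hM hx1 hxM hexcess]
    simp only [mem_univ, true_and, Nat.cast_inj]
end
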